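/- Suppose real numbers β₁, β₃ satisfy β₃ > 0 and β₁ − β₃/2 > 0, and let n be a unit vector. Then for every symmetric traceless 3×3 matrix B lying in Q_n^out (i.e. B orthogonal to all matrices np + pn with p ⊥ n), the quantity (β₁ − 2β₃)(n·Bn)² + β₃|B|² is bounded below by c₀|B|² with c₀ = min{β₃, (2β₁ − β₃)/3} > 0. -/

import Mathlib

/-! For traceless `B` the quadratic form `n·Bn` is the Frobenius pairing of `B` with the traceless
part `n nᵀ - I/3` of `n nᵀ`, whose squared norm is `2/3`; Cauchy–Schwarz gives
`(n·Bn)² ≤ (2/3)|B|²`. If `β₁ ≥ 2β₃` the bound with constant `β₃` is immediate; otherwise the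
negative coefficient `β₁ - 2β₃` is absorbed using this inequality, leaving `(2β₁ - β₃)/3`. -/

open Matrix Finset

/-- Frobenius inner product of 3×3 matrices. -/
def frob (A B : Matrix (Fin 3) (Fin 3) ℝ) : ℝ := ∑ i, ∑ j, A i j * B i j

theorem card_mul_sq_quadForm_le_of_trace_eq_zero {ι : Type*} [Fintype ι]
    (n : ι → ℝ) (hn : ∑ i, n i ^ 2 = 1) (B : Matrix ι ι ℝ) (htr : B.trace = 0) :
    Fintype.card ι * (∑ i, ∑ j, n i * B i j * n j) ^ 2 ≤
      (Fintype.card ι - 1) * ∑ i, ∑ j, B i j ^ 2 := by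
  classical
  set d : ℝ := (Fintype.card ι : ℝ)
  have hd : 0 < d := by
    have : Nonempty ι := by
      by_contra h
      simp [not_nonempty_iff.mp h] at hn
    simp [d, Fintype.card_pos]
  set M : Matrix ι ι ℝ := vecMulVec n n - d⁻¹ • 1
  have hBM : ∑ i, ∑ j, B i j * M i j = ∑ i, ∑ j, n i * B i j * n j := by
    have : ∑ i, B i i = 0 := htr
    simp only [M, Matrix.sub_apply, vecMulVec_apply, Matrix.smul_apply, one_apply, smul_eq_mul,
      mul_ite, mul_one, mul_zero, mul_sub, sum_sub_distrib, sum_ite_eq, mem_univ, if_true,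
      ← sum_mul, this, zero_mul, sub_zero]
    exact Finset.sum_congr rfl fun i _ => Finset.sum_congr rfl fun j _ => by ring
  have hMM : ∑ i, ∑ j, M i j ^ 2 = (d - 1) / d := by
    simp only [M, Matrix.sub_apply, vecMulVec_apply, Matrix.smul_apply, one_apply, smul_eq_mul,
      mul_ite, mul_one, mul_zero, sub_sq, mul_pow, ite_pow, inv_pow, ne_eq, OfNat.ofNat_ne_zero,
      not_false_eq_true, zero_pow, sum_add_distrib, sum_sub_distrib, ← mul_sum, hn, sum_ite_eq,
      mem_univ, if_true, ← sum_mul, sum_const, card_univ, nsmul_eq_mul, ← sq]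
    field_simp
    ring
  have hcs := Finset.sum_mul_sq_le_sq_mul_sq (univ ×ˢ univ)
    (fun p : ι × ι => B p.1 p.2) (fun p => M p.1 p.2)
  simp only [Finset.sum_product, hBM, hMM] at hcs
  rw [mul_div_assoc', le_div_iff₀ hd] at hcs
  linarith

lemma frob_self (B : Matrix (Fin 3) (Fin 3) ℝ) : frob B B = ∑ i, ∑ j, B i j ^ 2 := by
  simp only [frob, sq]

lemma min_mul_le_of_three_mul_sq_le {β₁ β₃ s F : ℝ} (hs : 3 * s ^ 2 ≤ 2 * F) :
    min β₃ ((2 * β₁ - β₃) / 3) * F ≤ (β₁ - 2 * β₃) * s ^ 2 + β₃ * F := by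
  have hF : 0 ≤ F := by nlinarith [sq_nonneg s]
  rcases le_or_gt (2 * β₃) β₁ with hβ | hβ
  · nlinarith [mul_le_mul_of_nonneg_right (min_le_left β₃ ((2 * β₁ - β₃) / 3)) hF, sq_nonneg s]
  · nlinarith [mul_le_mul_of_nonneg_right (min_le_right β₃ ((2 * β₁ - β₃) / 3)) hF]

theorem coercivity_on_Qout (β₁ β₃ : ℝ) (h3 : 0 < β₃) (h1 : 0 < β₁ - β₃ / 2)
    (n : Fin 3 → ℝ) (hn : ∑ i, n i ^ 2 = 1) :
    0 < min β₃ ((2 * β₁ - β₃) / 3) ∧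
    ∀ B : Matrix (Fin 3) (Fin 3) ℝ, B.IsSymm → B.trace = 0 →
      (∀ p : Fin 3 → ℝ, (∑ i, p i * n i = 0) →
        frob B (vecMulVec n p + vecMulVec p n) = 0) →
      min β₃ ((2 * β₁ - β₃) / 3) * frob B B ≤
        (β₁ - 2 * β₃) * (∑ i, ∑ j, n i * B i j * n j) ^ 2 + β₃ * frob B B := by
  refine ⟨lt_min h3 (by linarith), fun B _ htr _ => min_mul_le_of_three_mul_sq_le ?_⟩
  have h := card_mul_sq_quadForm_le_of_trace_eq_zero n hn B htr
  norm_num at h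
  rw [frob_self]
  linarith
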